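/- arXiv:1006.5017 — 5 statements merged into one kernel-verified Lean document; each statement's English description precedes it below -/
import Mathlib

section
/- Let M be a 𝕋-module with a bicomplex scalar product (·,·). Then for all ψ, φ ∈ M, (ψ, φ) = e₁(e₁ψ, e₁φ)₁̂ + e₂(e₂ψ, e₂φ)₂̂, where (·,·)ₖ̂ := Pₖ∘(·,·). Moreover each (·,·)ₖ̂ restricted to Vₖ = eₖM is a standard ℂ(i₁)-valued scalar product. -/
noncomputable section

/-- The bicomplex numbers 𝕋, represented in idempotent coordinates:
`(a, b)` corresponds to `a e₁ + b e₂`.  With componentwise ring operations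
(the `Prod` instance) this is the commutative ring of bicomplex numbers. -/
abbrev Bicomplex : Type := ℂ × ℂ

namespace BC

/-- The imaginary unit i₁ (image of the imaginary unit of ℂ(i₁)). -/
def i1 : Bicomplex := (Complex.I, Complex.I)

/-- The imaginary unit i₂. -/
def i2 : Bicomplex := (-Complex.I, Complex.I)

/-- The hyperbolic unit j := i₁ i₂. -/
def j : Bicomplex := i1 * i2

/-- The idempotent e₁ = (1 + j)/2. -/
def e1 : Bicomplex := (1 + j) / 2

/-- The idempotent e₂ = (1 − j)/2. -/
def e2 : Bicomplex := (1 - j) / 2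

/-- The embedding of ℂ(i₁) into 𝕋. -/
def ofC (z : ℂ) : Bicomplex := (z, z)

/-- The first standard component z₁ of w = z₁ + z₂ i₂. -/
def std1 (w : Bicomplex) : ℂ := (w.1 + w.2) / 2

/-- The second standard component z₂ of w = z₁ + z₂ i₂. -/
def std2 (w : Bicomplex) : ℂ := Complex.I * (w.1 - w.2) / 2

/-- The Euclidean ℝ⁴ norm |w| = √(|z₁|² + |z₂|²). -/
def enorm (w : Bicomplex) : ℝ :=
  Real.sqrt (‖std1 w‖ ^ 2 + ‖std2 w‖ ^ 2)

/-- w^{†₁} = z̄₁ + z̄₂ i₂. -/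
def conj1 (w : Bicomplex) : Bicomplex :=
  ofC (starRingEnd ℂ (std1 w)) + ofC (starRingEnd ℂ (std2 w)) * i2

/-- w^{†₂} = z₁ − z₂ i₂. -/
def conj2 (w : Bicomplex) : Bicomplex := ofC (std1 w) - ofC (std2 w) * i2

/-- w^{†₃} = z̄₁ − z̄₂ i₂. -/
def conj3 (w : Bicomplex) : Bicomplex :=
  ofC (starRingEnd ℂ (std1 w)) - ofC (starRingEnd ℂ (std2 w)) * i2

/-- The idempotent projection P₁. -/
def P1 (w : Bicomplex) : ℂ := w.1

/-- The idempotent projection P₂. -/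
def P2 (w : Bicomplex) : ℂ := w.2

/-- The set 𝔻⁺ of positive hyperbolic numbers. -/
def Dplus : Set Bicomplex :=
  {w | ∃ x y : ℝ, 0 ≤ x ∧ 0 ≤ y ∧ w = ofC (x : ℂ) * e1 + ofC (y : ℂ) * e2}

end BC

namespace BC

/-- V₁ = e₁ M. -/
def V1 (M : Type*) [AddCommGroup M] [Module Bicomplex M] : Set M :=
  Set.range fun m : M => e1 • m

/-- V₂ = e₂ M. -/
def V2 (M : Type*) [AddCommGroup M] [Module Bicomplex M] : Set M :=
  Set.range fun m : M => e2 • m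

end BC

/-- A (hyperbolic-positive) bicomplex scalar product on a 𝕋-module M. -/
structure BCInner (M : Type*) [AddCommGroup M] [Module Bicomplex M] where
  inner : M → M → Bicomplex
  add_right : ∀ ψ φ χ : M, inner ψ (φ + χ) = inner ψ φ + inner ψ χ
  smul_right : ∀ (α : Bicomplex) (ψ φ : M), inner ψ (α • φ) = α * inner ψ φ
  conj_symm : ∀ ψ φ : M, inner ψ φ = BC.conj3 (inner φ ψ)
  definite : ∀ ψ : M, inner ψ ψ = 0 ↔ ψ = 0
  hyperbolic_pos : ∀ ψ : M, inner ψ ψ ∈ BC.Dplus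

namespace BCInner

variable {M : Type*} [AddCommGroup M] [Module Bicomplex M]

/-- The induced 𝕋-norm ‖φ‖ = (1/√2)·√((e₁φ,e₁φ)₁̂ + (e₂φ,e₂φ)₂̂). -/
def bnorm (S : BCInner M) (φ : M) : ℝ :=
  (Real.sqrt 2)⁻¹ *
    Real.sqrt ((S.inner (BC.e1 • φ) (BC.e1 • φ)).1.re +
               (S.inner (BC.e2 • φ) (BC.e2 • φ)).2.re)

/-- Convergence of a sequence with respect to the induced 𝕋-norm. -/
def SeqLim (S : BCInner M) (f : ℕ → M) (x : M) : Prop :=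
  ∀ ε : ℝ, 0 < ε → ∃ N : ℕ, ∀ n ≥ N, S.bnorm (f n - x) < ε

/-- Cauchy sequences with respect to the induced 𝕋-norm. -/
def IsCauchy (S : BCInner M) (f : ℕ → M) : Prop :=
  ∀ ε : ℝ, 0 < ε → ∃ N : ℕ, ∀ m ≥ N, ∀ n ≥ N, S.bnorm (f m - f n) < ε

/-- Completeness: M together with S is a bicomplex Hilbert space. -/
def Complete (S : BCInner M) : Prop :=
  ∀ f : ℕ → M, S.IsCauchy f → ∃ x : M, S.SeqLim f x

/-- Convergence of the series Σ g l to x in the induced 𝕋-norm. -/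
def SeriesLim (S : BCInner M) (g : ℕ → M) (x : M) : Prop :=
  S.SeqLim (fun N => ∑ l ∈ Finset.range N, g l) x

/-- A Schauder 𝕋-basis: every ψ has a unique expansion ψ = Σ wₗ mₗ. -/
def IsSchauderBasis (S : BCInner M) (m : ℕ → M) : Prop :=
  ∀ ψ : M, ∃! w : ℕ → Bicomplex, S.SeriesLim (fun l => w l • m l) ψ

end BCInner

/-- `ip` is a standard ℂ(i₁)-valued scalar product on the subset V. -/
def IsStdInner {M : Type*} [AddCommGroup M] [Module Bicomplex M]
    (V : Set M) (ip : M → M → ℂ) : Prop :=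
  (∀ ψ φ χ : M, ψ ∈ V → φ ∈ V → χ ∈ V → ip ψ (φ + χ) = ip ψ φ + ip ψ χ) ∧
  (∀ (z : ℂ) (ψ φ : M), ψ ∈ V → φ ∈ V → ip ψ (BC.ofC z • φ) = z * ip ψ φ) ∧
  (∀ ψ φ : M, ψ ∈ V → φ ∈ V → ip ψ φ = starRingEnd ℂ (ip φ ψ)) ∧
  (∀ ψ : M, ψ ∈ V → (ip ψ ψ).im = 0 ∧ 0 ≤ (ip ψ ψ).re) ∧
  (∀ ψ : M, ψ ∈ V → (ip ψ ψ = 0 ↔ ψ = 0))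

namespace BCHelper

lemma e1_eq : BC.e1 = (1, 0) := by
  simp only [BC.e1, BC.j, BC.i1, BC.i2, Prod.mk_mul_mk, Prod.ext_iff, Prod.div_def]
  constructor <;> simp [Complex.ext_iff]

lemma e2_eq : BC.e2 = (0, 1) := by
  simp only [BC.e2, BC.j, BC.i1, BC.i2, Prod.mk_mul_mk, Prod.ext_iff, Prod.div_def]
  constructor <;> simp [Complex.ext_iff]

lemma conj3_eq (w : Bicomplex) :
    BC.conj3 w = (starRingEnd ℂ w.1, starRingEnd ℂ w.2) := by
  simp only [BC.conj3, BC.ofC, BC.std1, BC.std2, BC.i2, Prod.mk_mul_mk,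
    Prod.mk_sub_mk, Prod.ext_iff, map_div₀, map_add, map_sub, map_mul,
    Complex.conj_I, map_ofNat]
  constructor <;> (field_simp; ring_nf) <;> simp [Complex.I_sq] <;> ring

lemma dplus_mem (w : Bicomplex) (h : w ∈ BC.Dplus) :
    w.1.im = 0 ∧ 0 ≤ w.1.re ∧ w.2.im = 0 ∧ 0 ≤ w.2.re := by
  obtain ⟨x, y, hx, hy, rfl⟩ := h
  simp [BC.ofC, e1_eq, e2_eq, hx, hy]

variable {M : Type*} [AddCommGroup M] [Module Bicomplex M] (S : BCInner M)

lemma inner_smul_left (α : Bicomplex) (ψ φ : M) :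
    S.inner (α • ψ) φ = BC.conj3 α * S.inner ψ φ := by
  rw [S.conj_symm, S.smul_right, S.conj_symm ψ φ]
  simp [conj3_eq, Prod.ext_iff, mul_comm]

lemma inner_e (ε : Bicomplex) (hε : BC.conj3 ε = ε) (hε2 : ε * ε = ε)
    (ψ φ : M) : S.inner (ε • ψ) (ε • φ) = ε * S.inner ψ φ := by
  rw [S.smul_right, inner_smul_left, hε, ← mul_assoc, hε2]

lemma conj3_e1 : BC.conj3 BC.e1 = BC.e1 := by simp [conj3_eq, e1_eq]
lemma conj3_e2 : BC.conj3 BC.e2 = BC.e2 := by simp [conj3_eq, e2_eq]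

lemma inner_e1 (ψ φ : M) :
    S.inner (BC.e1 • ψ) (BC.e1 • φ) = BC.e1 * S.inner ψ φ :=
  inner_e S _ conj3_e1 (by simp [e1_eq]) ψ φ

lemma inner_e2 (ψ φ : M) :
    S.inner (BC.e2 • ψ) (BC.e2 • φ) = BC.e2 * S.inner ψ φ :=
  inner_e S _ conj3_e2 (by simp [e2_eq]) ψ φ

lemma inner_zero_zero : S.inner (0 : M) 0 = 0 := (S.definite 0).mpr rfl

end BCHelper

/-- Decomposition of a bicomplex scalar product:
(ψ, φ) = e₁ (e₁ψ, e₁φ)₁̂ + e₂ (e₂ψ, e₂φ)₂̂, and each (·,·)ₖ̂ is a standard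
scalar product on Vₖ. -/
theorem bicomplex_inner_decomposition (M : Type*) [AddCommGroup M]
    [Module Bicomplex M] (S : BCInner M) :
    (∀ ψ φ : M, S.inner ψ φ =
      BC.e1 * BC.ofC (BC.P1 (S.inner (BC.e1 • ψ) (BC.e1 • φ))) +
      BC.e2 * BC.ofC (BC.P2 (S.inner (BC.e2 • ψ) (BC.e2 • φ)))) ∧
    IsStdInner (BC.V1 M) (fun ψ φ => BC.P1 (S.inner ψ φ)) ∧
    IsStdInner (BC.V2 M) (fun ψ φ => BC.P2 (S.inner ψ φ)) := by
  open BCHelper in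
  refine ⟨?_, ?_, ?_⟩
  · intro ψ φ
    rw [inner_e1, inner_e2]
    simp [BC.P1, BC.P2, BC.ofC, e1_eq, e2_eq, Prod.ext_iff]
  · refine ⟨fun ψ φ χ _ _ _ => ?_, fun z ψ φ _ _ => ?_, fun ψ φ _ _ => ?_,
      fun ψ _ => ?_, fun ψ hψ => ?_⟩ <;> dsimp only
    · rw [S.add_right]; rfl
    · rw [S.smul_right]; rfl
    · rw [S.conj_symm ψ φ, conj3_eq]; rfl
    · obtain ⟨h1, h2, _, _⟩ := dplus_mem _ (S.hyperbolic_pos ψ)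
      exact ⟨h1, h2⟩
    · obtain ⟨m, rfl⟩ := hψ
      dsimp only
      rw [inner_e1]
      constructor
      · intro h
        rw [← S.definite (BC.e1 • m), inner_e1]
        have h2 : (BC.e1 * S.inner m m).2 = 0 := by simp [e1_eq]
        exact Prod.ext h h2
      · intro h; rw [← inner_e1, h, inner_zero_zero]; rfl
  · refine ⟨fun ψ φ χ _ _ _ => ?_, fun z ψ φ _ _ => ?_, fun ψ φ _ _ => ?_,
      fun ψ _ => ?_, fun ψ hψ => ?_⟩ <;> dsimp only
    · rw [S.add_right]; rfl
    · rw [S.smul_right]; rfl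
    · rw [S.conj_symm ψ φ, conj3_eq]; rfl
    · obtain ⟨_, _, h1, h2⟩ := dplus_mem _ (S.hyperbolic_pos ψ)
      exact ⟨h1, h2⟩
    · obtain ⟨m, rfl⟩ := hψ
      dsimp only
      rw [inner_e2]
      constructor
      · intro h
        rw [← S.definite (BC.e2 • m), inner_e2]
        have h1 : (BC.e2 * S.inner m m).1 = 0 := by simp [e2_eq]
        exact Prod.ext h1 h
      · intro h; rw [← inner_e2, h, inner_zero_zero]; rfl
end
end

section
/- Let M be a 𝕋-module with a hyperbolic-positive bicomplex scalar product, and define ‖φ‖ := (1/√2)·√((e₁φ, e₁φ)₁̂ + (e₂φ, e₂φ)₂̂). Then ‖·‖ is a 𝕋-norm on M; in particular ‖w·ψ‖ ≤ √2 |w|·‖ψ‖ for all w ∈ 𝕋 and ψ ∈ M, and ‖φ‖ equals the Euclidean norm of any bicomplex square root of (φ, φ). -/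
noncomputable section

namespace BC

lemma e1_eq : e1 = ((1:ℂ), (0:ℂ)) := by
  simp [e1, j, i1, i2, Prod.ext_iff, Complex.ext_iff]

lemma e2_eq : e2 = ((0:ℂ), (1:ℂ)) := by
  simp [e2, j, i1, i2, Prod.ext_iff, Complex.ext_iff]

lemma conj3_eq (w : Bicomplex) :
    conj3 w = ((starRingEnd ℂ) w.1, (starRingEnd ℂ) w.2) := by
  refine Prod.ext ?_ ?_ <;>
    simp [conj3, ofC, std1, std2, i2, map_div₀, map_add, map_sub, map_mul,
      Complex.conj_I, Complex.I_sq, map_ofNat, Prod.fst_mul, Prod.snd_mul] <;>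
    ring_nf <;> simp only [Complex.I_sq] <;> ring

lemma conj3_mul (v w : Bicomplex) : conj3 (v * w) = conj3 v * conj3 w := by
  simp [conj3_eq, Prod.ext_iff, Prod.fst_mul, Prod.snd_mul]

lemma conj3_add (v w : Bicomplex) : conj3 (v + w) = conj3 v + conj3 w := by
  simp [conj3_eq, Prod.ext_iff]

lemma mem_Dplus {w : Bicomplex} (h : w ∈ Dplus) :
    ∃ x y : ℝ, 0 ≤ x ∧ 0 ≤ y ∧ w = ((x:ℂ), (y:ℂ)) := by
  obtain ⟨x, y, hx, hy, hw⟩ := h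
  exact ⟨x, y, hx, hy, by simp [hw, ofC, e1_eq, e2_eq, Prod.ext_iff]⟩

lemma enorm_eq (w : Bicomplex) :
    enorm w = Real.sqrt ((‖w.1‖ ^ 2 + ‖w.2‖ ^ 2) / 2) := by
  unfold enorm std1 std2
  congr 1
  simp only [Complex.sq_norm, Complex.normSq_apply, Complex.add_re, Complex.add_im,
    Complex.sub_re, Complex.sub_im, Complex.div_re, Complex.div_im, Complex.mul_re,
    Complex.mul_im, Complex.I_re, Complex.I_im, Complex.ofReal_re, Complex.ofReal_im,
    Complex.normSq_ofNat, Complex.re_ofNat, Complex.im_ofNat]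
  ring

/-- The diagonal ring homomorphism ℂ → 𝕋. -/
def ofCHom : ℂ →+* Bicomplex := (RingHom.id ℂ).prod (RingHom.id ℂ)

end BC

namespace BCInner

variable {M : Type*} [AddCommGroup M] [Module Bicomplex M] (S : BCInner M)

lemma smul_left' (α : Bicomplex) (ψ φ : M) :
    S.inner (α • ψ) φ = BC.conj3 α * S.inner ψ φ := by
  rw [S.conj_symm, S.smul_right, BC.conj3_mul, ← S.conj_symm]

lemma add_left' (ψ φ χ : M) :
    S.inner (ψ + φ) χ = S.inner ψ χ + S.inner φ χ := by
  rw [S.conj_symm, S.add_right, BC.conj3_add, ← S.conj_symm, ← S.conj_symm]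

lemma inner_self (ψ : M) :
    ∃ x y : ℝ, 0 ≤ x ∧ 0 ≤ y ∧ S.inner ψ ψ = ((x:ℂ), (y:ℂ)) :=
  BC.mem_Dplus (S.hyperbolic_pos ψ)

lemma inner_smul_self (α : Bicomplex) (φ : M) :
    S.inner (α • φ) (α • φ) = BC.conj3 α * α * S.inner φ φ := by
  rw [S.smul_right, S.smul_left']
  ring

lemma bnorm_eq (φ : M) :
    S.bnorm φ = (Real.sqrt 2)⁻¹ *
      Real.sqrt ((S.inner φ φ).1.re + (S.inner φ φ).2.re) := by
  unfold bnorm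
  rw [S.inner_smul_self, S.inner_smul_self]
  congr 3
  · simp [BC.conj3_eq, BC.e1_eq, Prod.fst_mul]
  · simp [BC.conj3_eq, BC.e2_eq, Prod.snd_mul]

end BCInner

/-- The induced norm ‖·‖ is a 𝕋-norm on M: a genuine norm on the underlying
ℂ(i₁)-vector space with ‖wψ‖ ≤ √2|w|‖ψ‖, and ‖φ‖ is the Euclidean norm of any
bicomplex square root of (φ, φ). -/
theorem bicomplex_T_norm (M : Type*) [AddCommGroup M] [Module Bicomplex M]
    (S : BCInner M) :
    (∀ φ : M, 0 ≤ S.bnorm φ) ∧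
    (∀ φ : M, S.bnorm φ = 0 ↔ φ = 0) ∧
    (∀ φ ψ : M, S.bnorm (φ + ψ) ≤ S.bnorm φ + S.bnorm ψ) ∧
    (∀ (z : ℂ) (φ : M), S.bnorm (BC.ofC z • φ) = ‖z‖ * S.bnorm φ) ∧
    (∀ (w : Bicomplex) (ψ : M), S.bnorm (w • ψ) ≤ Real.sqrt 2 * BC.enorm w * S.bnorm ψ) ∧
    (∀ (φ : M) (r : Bicomplex), r * r = S.inner φ φ → S.bnorm φ = BC.enorm r) := by
  classical
  letI : Module ℂ M := Module.compHom M BC.ofCHom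
  have hsmul : ∀ (z : ℂ) (φ : M), z • φ = BC.ofC z • φ := fun z φ => rfl
  have key : ∀ ψ : M, 0 ≤ (S.inner ψ ψ).1.re ∧ 0 ≤ (S.inner ψ ψ).2.re ∧
      (S.inner ψ ψ).1 = ((S.inner ψ ψ).1.re : ℂ) ∧
      (S.inner ψ ψ).2 = ((S.inner ψ ψ).2.re : ℂ) := by
    intro ψ
    obtain ⟨x, y, hx, hy, h⟩ := S.inner_self ψ
    rw [h]
    simp [hx, hy]
  letI core : InnerProductSpace.Core ℂ M :=
    { inner := fun ψ φ => (S.inner ψ φ).1 + (S.inner ψ φ).2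
      conj_inner_symm := by
        intro x y
        show (starRingEnd ℂ) ((S.inner y x).1 + (S.inner y x).2)
          = (S.inner x y).1 + (S.inner x y).2
        rw [S.conj_symm x y, BC.conj3_eq]
        simp
      re_inner_nonneg := by
        intro x
        obtain ⟨hx, hy, -, -⟩ := key x
        show 0 ≤ RCLike.re ((S.inner x x).1 + (S.inner x x).2)
        simpa using add_nonneg hx hy
      add_left := by
        intro x y z
        show (S.inner (x + y) z).1 + (S.inner (x + y) z).2
          = ((S.inner x z).1 + (S.inner x z).2) + ((S.inner y z).1 + (S.inner y z).2)
        rw [S.add_left']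
        simp only [Prod.fst_add, Prod.snd_add]
        ring
      smul_left := by
        intro x y r
        show (S.inner (BC.ofC r • x) y).1 + (S.inner (BC.ofC r • x) y).2
          = (starRingEnd ℂ) r * ((S.inner x y).1 + (S.inner x y).2)
        rw [S.smul_left', BC.conj3_eq]
        simp only [BC.ofC, Prod.fst_mul, Prod.snd_mul]
        ring
      definite := by
        intro x hx
        replace hx : (S.inner x x).1 + (S.inner x x).2 = 0 := hx
        obtain ⟨h1, h2, e1, e2⟩ := key x
        have hre : (S.inner x x).1.re + (S.inner x x).2.re = 0 := by
          have := congrArg Complex.re hx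
          simpa using this
        have hx1 : (S.inner x x).1.re = 0 := by linarith
        have hx2 : (S.inner x x).2.re = 0 := by linarith
        have : S.inner x x = 0 := by
          have : S.inner x x = (((S.inner x x).1.re : ℂ), ((S.inner x x).2.re : ℂ)) :=
            Prod.ext e1 e2
          rw [this, hx1, hx2]
          simp [Prod.ext_iff]
        exact (S.definite x).mp this }
  letI : NormedAddCommGroup M := core.toNormedAddCommGroup
  letI : InnerProductSpace ℂ M := InnerProductSpace.ofCore core.toCore
  have hnorm : ∀ φ : M, ‖φ‖ = Real.sqrt ((S.inner φ φ).1.re + (S.inner φ φ).2.re) := by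
    intro φ
    show Real.sqrt (RCLike.re ((S.inner φ φ).1 + (S.inner φ φ).2)) = _
    simp
  have hb : ∀ φ : M, S.bnorm φ = (Real.sqrt 2)⁻¹ * ‖φ‖ := by
    intro φ; rw [S.bnorm_eq, hnorm]
  have hs2 : (0:ℝ) < Real.sqrt 2 := by positivity
  refine ⟨?_, ?_, ?_, ?_, ?_, ?_⟩
  · intro φ; rw [hb]; positivity
  · intro φ
    rw [hb, mul_eq_zero]
    have : (Real.sqrt 2)⁻¹ ≠ 0 := by positivity
    simp [this, norm_eq_zero]
  · intro φ ψ
    rw [hb, hb, hb, ← mul_add]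
    exact mul_le_mul_of_nonneg_left (norm_add_le φ ψ) (by positivity)
  · intro z φ
    rw [hb, hb, ← hsmul, norm_smul]
    ring
  · intro w ψ
    obtain ⟨x, y, hx, hy, hself⟩ := S.inner_self ψ
    have hw : S.inner (w • ψ) (w • ψ) = BC.conj3 w * w * S.inner ψ ψ := S.inner_smul_self w ψ
    rw [S.bnorm_eq, S.bnorm_eq, hw, hself, BC.conj3_eq, BC.enorm_eq]
    have h1 : ((((starRingEnd ℂ) w.1, (starRingEnd ℂ) w.2) * w * ((x:ℂ), (y:ℂ))).1).re
        = ‖w.1‖ ^ 2 * x := by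
      simp only [Prod.fst_mul]
      rw [show (starRingEnd ℂ) w.1 * w.1 = (Complex.normSq w.1 : ℂ) by
        rw [mul_comm]; exact Complex.mul_conj w.1]
      rw [← Complex.sq_norm]
      norm_cast
    have h2 : ((((starRingEnd ℂ) w.1, (starRingEnd ℂ) w.2) * w * ((x:ℂ), (y:ℂ))).2).re
        = ‖w.2‖ ^ 2 * y := by
      simp only [Prod.snd_mul]
      rw [show (starRingEnd ℂ) w.2 * w.2 = (Complex.normSq w.2 : ℂ) by
        rw [mul_comm]; exact Complex.mul_conj w.2]
      rw [← Complex.sq_norm]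
      norm_cast
    rw [h1, h2]
    have hxre : (((x:ℂ), (y:ℂ)) : Bicomplex).1.re = x := rfl
    have hyre : (((x:ℂ), (y:ℂ)) : Bicomplex).2.re = y := rfl
    rw [hxre, hyre]
    set a := ‖w.1‖ ^ 2 with ha
    set b := ‖w.2‖ ^ 2 with hbdef
    have ha0 : 0 ≤ a := by positivity
    have hb0 : 0 ≤ b := by positivity
    -- goal: (√2)⁻¹ √(a x + b y) ≤ √2 * √((a+b)/2) * ((√2)⁻¹ √(x+y))
    have hsq : Real.sqrt (a * x + b * y) ≤
        Real.sqrt 2 * Real.sqrt ((a + b) / 2) * Real.sqrt (x + y) := by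
      rw [← Real.sqrt_mul (by norm_num : (0:ℝ) ≤ 2), ← Real.sqrt_mul (by positivity)]
      apply Real.sqrt_le_sqrt
      nlinarith
    calc (Real.sqrt 2)⁻¹ * Real.sqrt (a * x + b * y)
        ≤ (Real.sqrt 2)⁻¹ * (Real.sqrt 2 * Real.sqrt ((a + b) / 2) * Real.sqrt (x + y)) :=
          mul_le_mul_of_nonneg_left hsq (by positivity)
      _ = Real.sqrt 2 * Real.sqrt ((a + b) / 2) * ((Real.sqrt 2)⁻¹ * Real.sqrt (x + y)) := by
          ring
  · intro φ r hr
    obtain ⟨x, y, hx, hy, hself⟩ := S.inner_self φ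
    rw [hself] at hr
    have hr1 : r.1 * r.1 = (x:ℂ) := congrArg Prod.fst hr
    have hr2 : r.2 * r.2 = (y:ℂ) := congrArg Prod.snd hr
    have habs1 : ‖r.1‖ ^ 2 = x := by
      have := congrArg (‖·‖) hr1
      rwa [norm_mul, ← sq, Complex.norm_real, Real.norm_eq_abs, abs_of_nonneg hx] at this
    have habs2 : ‖r.2‖ ^ 2 = y := by
      have := congrArg (‖·‖) hr2
      rwa [norm_mul, ← sq, Complex.norm_real, Real.norm_eq_abs, abs_of_nonneg hy] at this
    rw [S.bnorm_eq, hself, BC.enorm_eq, habs1, habs2]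
    have hxre : (((x:ℂ), (y:ℂ)) : Bicomplex).1.re = x := rfl
    have hyre : (((x:ℂ), (y:ℂ)) : Bicomplex).2.re = y := rfl
    rw [hxre, hyre]
    rw [show (x + y) / 2 = (x + y) * (2:ℝ)⁻¹ by ring,
      Real.sqrt_mul (by positivity), Real.sqrt_inv]
    ring
end
end

section
/- Bicomplex Schwarz inequality: for all ψ, φ in a bicomplex Hilbert space M, the Euclidean norm of the bicomplex scalar product satisfies |(ψ, φ)| ≤ √2·‖ψ‖·‖φ‖. -/
noncomputable section

namespace BCAux
open Complex

lemma conj3_eq (w : Bicomplex) : BC.conj3 w = (starRingEnd ℂ w.1, starRingEnd ℂ w.2) := by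
  simp [BC.conj3, BC.ofC, BC.std1, BC.std2, BC.i2, Prod.ext_iff, Prod.mk_mul_mk, map_div₀,
    map_add, map_sub, map_mul, Complex.conj_I, Complex.I_sq, map_ofNat]
  constructor <;> (ring_nf; rw [Complex.I_sq]; ring)

lemma e1_eq : BC.e1 = ((1:ℂ), (0:ℂ)) := by
  simp [BC.e1, BC.j, BC.i1, BC.i2, Prod.ext_iff, Prod.mk_mul_mk]

lemma e2_eq : BC.e2 = ((0:ℂ), (1:ℂ)) := by
  simp [BC.e2, BC.j, BC.i1, BC.i2, Prod.ext_iff, Prod.mk_mul_mk]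

lemma enorm_eq (w : Bicomplex) :
    BC.enorm w = Real.sqrt ((‖w.1‖ ^ 2 + ‖w.2‖ ^ 2) / 2) := by
  unfold BC.enorm
  congr 1
  simp only [BC.std1, BC.std2, Complex.sq_norm, Complex.normSq_apply, Complex.div_re,
    Complex.div_im, Complex.add_re, Complex.add_im, Complex.sub_re, Complex.sub_im,
    Complex.mul_re, Complex.mul_im, Complex.I_re, Complex.I_im, Complex.normSq_apply,
    Complex.ofReal_re, Complex.ofReal_im, Complex.re_ofNat, Complex.im_ofNat]
  ring

variable {M : Type*} [AddCommGroup M] [Module Bicomplex M] (S : BCInner M)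

lemma bc_inner_zero_right (ψ : M) : S.inner ψ 0 = 0 := by
  have h := S.smul_right 0 ψ 0
  simpa using h

lemma bc_inner_neg_right (ψ φ : M) : S.inner ψ (-φ) = - S.inner ψ φ := by
  have h := S.smul_right (-1) ψ φ
  simpa using h

lemma bc_inner_sub_right (ψ φ χ : M) : S.inner ψ (φ - χ) = S.inner ψ φ - S.inner ψ χ := by
  rw [sub_eq_add_neg, S.add_right, bc_inner_neg_right, sub_eq_add_neg]

lemma bc_inner_add_left (ψ φ χ : M) : S.inner (ψ + χ) φ = S.inner ψ φ + S.inner χ φ := by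
  rw [S.conj_symm, S.add_right, S.conj_symm ψ φ, S.conj_symm χ φ, conj3_eq, conj3_eq, conj3_eq]
  simp [Prod.ext_iff]

lemma bc_inner_smul_left (α : Bicomplex) (ψ φ : M) :
    S.inner (α • ψ) φ = BC.conj3 α * S.inner ψ φ := by
  rw [S.conj_symm, S.smul_right, S.conj_symm ψ φ, conj3_eq, conj3_eq, conj3_eq]
  simp [Prod.ext_iff, Prod.mk_mul_mk]

lemma bc_inner_neg_left (ψ φ : M) : S.inner (-ψ) φ = - S.inner ψ φ := by
  have h := bc_inner_smul_left S (-1) ψ φ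
  have h1 : BC.conj3 (-1 : Bicomplex) = -1 := by
    rw [conj3_eq]; simp [Prod.ext_iff]
  simpa [h1] using h

lemma bc_inner_sub_left (ψ φ χ : M) : S.inner (ψ - χ) φ = S.inner ψ φ - S.inner χ φ := by
  rw [sub_eq_add_neg, bc_inner_add_left, bc_inner_neg_left, sub_eq_add_neg]

lemma inner_self (ψ : M) :
    ∃ x y : ℝ, 0 ≤ x ∧ 0 ≤ y ∧ S.inner ψ ψ = ((x:ℂ), (y:ℂ)) := by
  obtain ⟨x, y, hx, hy, h⟩ := S.hyperbolic_pos ψ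
  refine ⟨x, y, hx, hy, ?_⟩
  rw [h, e1_eq, e2_eq]
  simp [BC.ofC, Prod.ext_iff, Prod.mk_mul_mk]

lemma inner_self_re1_nonneg (ψ : M) : 0 ≤ (S.inner ψ ψ).1.re := by
  obtain ⟨x, y, hx, hy, h⟩ := inner_self S ψ
  rw [h]; simpa using hx

lemma inner_self_re2_nonneg (ψ : M) : 0 ≤ (S.inner ψ ψ).2.re := by
  obtain ⟨x, y, hx, hy, h⟩ := inner_self S ψ
  rw [h]; simpa using hy

lemma inner_expand (α : Bicomplex) (ψ φ : M) :
    S.inner (ψ - α • φ) (ψ - α • φ) =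
      S.inner ψ ψ - α * S.inner ψ φ - BC.conj3 α * S.inner φ ψ
        + BC.conj3 α * α * S.inner φ φ := by
  rw [bc_inner_sub_right, bc_inner_sub_left, bc_inner_sub_left, S.smul_right, S.smul_right,
    bc_inner_smul_left, bc_inner_smul_left]
  ring

lemma key_real (a b c : ℝ) (ha : 0 ≤ a) (hb : 0 ≤ b) (hc : 0 ≤ c)
    (h : ∀ s : ℝ, 0 ≤ b * c * s ^ 2 + (-2 * c) * s + a) : c ≤ a * b := by
  have hd := discrim_le_zero (a := b * c) (b := -2 * c) (c := a) (fun x => by nlinarith [h x])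
  rw [discrim] at hd
  rcases eq_or_lt_of_le hc with hc0 | hc0
  · rw [← hc0]; positivity
  · have h2 : c * c ≤ a * b * c := by nlinarith
    exact le_of_mul_le_mul_right h2 hc0

lemma schwarz_comp1 (ψ φ : M) :
    ‖(S.inner ψ φ).1‖ ^ 2 ≤ (S.inner ψ ψ).1.re * (S.inner φ φ).1.re := by
  set z := (S.inner ψ φ).1 with hz
  set a := (S.inner ψ ψ).1.re
  set b := (S.inner φ φ).1.re
  have ha : 0 ≤ a := inner_self_re1_nonneg S ψ
  have hb : 0 ≤ b := inner_self_re1_nonneg S φ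
  have hre1 : (S.inner ψ ψ).1 = (a:ℂ) := by
    obtain ⟨x, y, _, _, h⟩ := inner_self S ψ
    simp [a, h]
  have hre2 : (S.inner φ φ).1 = (b:ℂ) := by
    obtain ⟨x, y, _, _, h⟩ := inner_self S φ
    simp [b, h]
  have hsym : (S.inner φ ψ).1 = starRingEnd ℂ z := by
    rw [hz, S.conj_symm ψ φ, conj3_eq]
    simp
  rw [Complex.sq_norm, Complex.normSq_apply]
  have hkey : ∀ s : ℝ, 0 ≤ b * (z.re * z.re + z.im * z.im) * s ^ 2
      + (-2 * (z.re * z.re + z.im * z.im)) * s + a := by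
    intro s
    have hpos := inner_self_re1_nonneg S (ψ - (((s:ℂ) * starRingEnd ℂ z, 0) : Bicomplex) • φ)
    rw [inner_expand] at hpos
    have hc3 : BC.conj3 (((s:ℂ) * starRingEnd ℂ z, 0) : Bicomplex)
        = (((s:ℂ) * z, 0) : Bicomplex) := by
      rw [conj3_eq]; simp [Prod.ext_iff]
    rw [hc3] at hpos
    simp only [Prod.fst_sub, Prod.fst_add, Prod.fst_mul, hre1, hre2, hsym,
      Complex.sub_re, Complex.add_re] at hpos
    rw [← hz] at hpos
    have e1 : ((s:ℂ) * starRingEnd ℂ z * z).re = s * (z.re * z.re + z.im * z.im) := by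
      simp only [Complex.mul_re, Complex.mul_im, Complex.conj_re, Complex.conj_im,
        Complex.ofReal_re, Complex.ofReal_im]
      ring
    have e2 : ((s:ℂ) * z * starRingEnd ℂ z).re = s * (z.re * z.re + z.im * z.im) := by
      simp only [Complex.mul_re, Complex.mul_im, Complex.conj_re, Complex.conj_im,
        Complex.ofReal_re, Complex.ofReal_im]
      ring
    have e3 : ((s:ℂ) * z * ((s:ℂ) * starRingEnd ℂ z) * (b:ℂ)).re
        = s ^ 2 * (z.re * z.re + z.im * z.im) * b := by
      simp only [Complex.mul_re, Complex.mul_im, Complex.conj_re, Complex.conj_im,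
        Complex.ofReal_re, Complex.ofReal_im]
      ring
    rw [e1, e2, e3, Complex.ofReal_re] at hpos
    nlinarith [hpos]
  have := key_real a b (z.re * z.re + z.im * z.im) ha hb
    (by nlinarith [sq_nonneg z.re, sq_nonneg z.im]) hkey
  linarith

lemma schwarz_comp2 (ψ φ : M) :
    ‖(S.inner ψ φ).2‖ ^ 2 ≤ (S.inner ψ ψ).2.re * (S.inner φ φ).2.re := by
  set z := (S.inner ψ φ).2 with hz
  set a := (S.inner ψ ψ).2.re
  set b := (S.inner φ φ).2.re
  have ha : 0 ≤ a := inner_self_re2_nonneg S ψ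
  have hb : 0 ≤ b := inner_self_re2_nonneg S φ
  have hre1 : (S.inner ψ ψ).2 = (a:ℂ) := by
    obtain ⟨x, y, _, _, h⟩ := inner_self S ψ
    simp [a, h]
  have hre2 : (S.inner φ φ).2 = (b:ℂ) := by
    obtain ⟨x, y, _, _, h⟩ := inner_self S φ
    simp [b, h]
  have hsym : (S.inner φ ψ).2 = starRingEnd ℂ z := by
    rw [hz, S.conj_symm ψ φ, conj3_eq]
    simp
  rw [Complex.sq_norm, Complex.normSq_apply]
  have hkey : ∀ s : ℝ, 0 ≤ b * (z.re * z.re + z.im * z.im) * s ^ 2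
      + (-2 * (z.re * z.re + z.im * z.im)) * s + a := by
    intro s
    have hpos := inner_self_re2_nonneg S (ψ - ((0, (s:ℂ) * starRingEnd ℂ z) : Bicomplex) • φ)
    rw [inner_expand] at hpos
    have hc3 : BC.conj3 (((0:ℂ), (s:ℂ) * starRingEnd ℂ z) : Bicomplex)
        = (((0:ℂ), (s:ℂ) * z) : Bicomplex) := by
      rw [conj3_eq]; simp [Prod.ext_iff]
    rw [hc3] at hpos
    simp only [Prod.snd_sub, Prod.snd_add, Prod.snd_mul, hre1, hre2, hsym,
      Complex.sub_re, Complex.add_re] at hpos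
    rw [← hz] at hpos
    have e1 : ((s:ℂ) * starRingEnd ℂ z * z).re = s * (z.re * z.re + z.im * z.im) := by
      simp only [Complex.mul_re, Complex.mul_im, Complex.conj_re, Complex.conj_im,
        Complex.ofReal_re, Complex.ofReal_im]
      ring
    have e2 : ((s:ℂ) * z * starRingEnd ℂ z).re = s * (z.re * z.re + z.im * z.im) := by
      simp only [Complex.mul_re, Complex.mul_im, Complex.conj_re, Complex.conj_im,
        Complex.ofReal_re, Complex.ofReal_im]
      ring
    have e3 : ((s:ℂ) * z * ((s:ℂ) * starRingEnd ℂ z) * (b:ℂ)).re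
        = s ^ 2 * (z.re * z.re + z.im * z.im) * b := by
      simp only [Complex.mul_re, Complex.mul_im, Complex.conj_re, Complex.conj_im,
        Complex.ofReal_re, Complex.ofReal_im]
      ring
    rw [e1, e2, e3, Complex.ofReal_re] at hpos
    nlinarith [hpos]
  have := key_real a b (z.re * z.re + z.im * z.im) ha hb
    (by nlinarith [sq_nonneg z.re, sq_nonneg z.im]) hkey
  linarith

lemma bnorm_eq (ψ : M) :
    S.bnorm ψ = (Real.sqrt 2)⁻¹ * Real.sqrt ((S.inner ψ ψ).1.re + (S.inner ψ ψ).2.re) := by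
  have h1 : S.inner (BC.e1 • ψ) (BC.e1 • ψ) = BC.conj3 BC.e1 * (BC.e1 * S.inner ψ ψ) := by
    rw [S.smul_right, bc_inner_smul_left]; ring
  have h2 : S.inner (BC.e2 • ψ) (BC.e2 • ψ) = BC.conj3 BC.e2 * (BC.e2 * S.inner ψ ψ) := by
    rw [S.smul_right, bc_inner_smul_left]; ring
  unfold BCInner.bnorm
  rw [h1, h2]
  simp [conj3_eq, e1_eq, e2_eq, Prod.mk_mul_mk]

end BCAux

open BCAux


/-- Bicomplex Schwarz inequality: |(ψ, φ)| ≤ √2 ‖ψ‖ ‖φ‖. -/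
theorem bicomplex_schwarz (M : Type*) [AddCommGroup M] [Module Bicomplex M]
    (S : BCInner M) (hC : S.Complete) (ψ φ : M) :
    BC.enorm (S.inner ψ φ) ≤ Real.sqrt 2 * S.bnorm ψ * S.bnorm φ := by
  rw [enorm_eq, bnorm_eq, bnorm_eq]
  set a1 := (S.inner ψ ψ).1.re
  set a2 := (S.inner ψ ψ).2.re
  set b1 := (S.inner φ φ).1.re
  set b2 := (S.inner φ φ).2.re
  have ha1 : 0 ≤ a1 := inner_self_re1_nonneg S ψ
  have ha2 : 0 ≤ a2 := inner_self_re2_nonneg S ψ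
  have hb1 : 0 ≤ b1 := inner_self_re1_nonneg S φ
  have hb2 : 0 ≤ b2 := inner_self_re2_nonneg S φ
  have h1 := schwarz_comp1 S ψ φ
  have h2 := schwarz_comp2 S ψ φ
  have hsum : (‖(S.inner ψ φ).1‖ ^ 2 + ‖(S.inner ψ φ).2‖ ^ 2) / 2
      ≤ (a1 + a2) * (b1 + b2) / 2 := by
    have : ‖(S.inner ψ φ).1‖ ^ 2 + ‖(S.inner ψ φ).2‖ ^ 2
        ≤ (a1 + a2) * (b1 + b2) := by nlinarith
    linarith
  calc Real.sqrt ((‖(S.inner ψ φ).1‖ ^ 2 + ‖(S.inner ψ φ).2‖ ^ 2) / 2)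
      ≤ Real.sqrt ((a1 + a2) * (b1 + b2) / 2) := Real.sqrt_le_sqrt hsum
    _ = Real.sqrt 2 * ((Real.sqrt 2)⁻¹ * Real.sqrt (a1 + a2)) *
        ((Real.sqrt 2)⁻¹ * Real.sqrt (b1 + b2)) := by
        rw [show (a1 + a2) * (b1 + b2) / 2 = ((a1 + a2) * (b1 + b2)) * (2⁻¹) by ring,
          Real.sqrt_mul (by positivity), Real.sqrt_mul (by positivity)]
        have hs2 : Real.sqrt 2⁻¹ = (Real.sqrt 2)⁻¹ := by
          rw [Real.sqrt_inv]
        have h2pos : (0:ℝ) < Real.sqrt 2 := Real.sqrt_pos.mpr (by norm_num)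
        rw [hs2]
        field_simp
end
end

section
/- Bicomplex Riesz representation theorem: let M be a bicomplex Hilbert space and f : M → 𝕋 a continuous 𝕋-linear functional. Then there exists a unique ψ ∈ M such that f(φ) = (ψ, φ) for all φ ∈ M. -/
noncomputable section

namespace RieszAux

lemma e1_eq : BC.e1 = ((1:ℂ), (0:ℂ)) := by
  simp only [BC.e1, BC.j, BC.i1, BC.i2, Prod.mk_mul_mk, Prod.ext_iff,
    Prod.fst_add, Prod.snd_add, Prod.fst_div, Prod.snd_div]
  constructor <;> simp [Complex.ext_iff]

lemma e2_eq : BC.e2 = ((0:ℂ), (1:ℂ)) := by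
  simp only [BC.e2, BC.j, BC.i1, BC.i2, Prod.mk_mul_mk, Prod.ext_iff,
    Prod.fst_sub, Prod.snd_sub, Prod.fst_div, Prod.snd_div]
  constructor <;> simp [Complex.ext_iff]

lemma conj3_eq (w : Bicomplex) :
    BC.conj3 w = (starRingEnd ℂ w.1, starRingEnd ℂ w.2) := by
  simp only [BC.conj3, BC.ofC, BC.std1, BC.std2, BC.i2, Prod.mk_mul_mk, Prod.ext_iff,
    Prod.fst_sub, Prod.snd_sub, map_div₀, map_add, map_mul, map_sub, Complex.conj_I]
  have h2 : (starRingEnd ℂ) 2 = 2 := by simp [Complex.ext_iff]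
  rw [h2]
  constructor <;> · ring_nf; simp only [Complex.I_sq]; ring

end RieszAux

namespace RieszAux

variable {M : Type*} [AddCommGroup M] [Module Bicomplex M] (S : BCInner M)

lemma inner_self (φ : M) :
    ∃ x y : ℝ, 0 ≤ x ∧ 0 ≤ y ∧ S.inner φ φ = ((x : ℂ), (y : ℂ)) := by
  obtain ⟨x, y, hx, hy, h⟩ := S.hyperbolic_pos φ
  refine ⟨x, y, hx, hy, ?_⟩
  rw [h, e1_eq, e2_eq]
  simp [BC.ofC, Prod.ext_iff]

lemma inner_add_left (ψ χ φ : M) :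
    S.inner (ψ + χ) φ = S.inner ψ φ + S.inner χ φ := by
  rw [S.conj_symm (ψ + χ) φ, S.add_right, S.conj_symm ψ φ, S.conj_symm χ φ,
    conj3_eq, conj3_eq, conj3_eq]
  simp [Prod.ext_iff]

lemma inner_smul_left (α : Bicomplex) (ψ φ : M) :
    S.inner (α • ψ) φ = BC.conj3 α * S.inner ψ φ := by
  rw [S.conj_symm (α • ψ) φ, S.smul_right, S.conj_symm ψ φ,
    conj3_eq, conj3_eq, conj3_eq]
  simp [Prod.ext_iff]

lemma inner_sub_left (ψ χ φ : M) :
    S.inner (ψ - χ) φ = S.inner ψ φ - S.inner χ φ := by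
  have h := inner_add_left S (ψ - χ) χ φ
  rw [sub_add_cancel] at h
  rw [h]; ring

lemma fst_eq (w : Bicomplex) : w.1 = BC.std1 w - Complex.I * BC.std2 w := by
  simp only [BC.std1, BC.std2]
  ring_nf
  simp only [Complex.I_sq]
  ring

lemma snd_eq (w : Bicomplex) : w.2 = BC.std1 w + Complex.I * BC.std2 w := by
  simp only [BC.std1, BC.std2]
  ring_nf
  simp only [Complex.I_sq]
  ring

lemma abs_std1_le (w : Bicomplex) : ‖BC.std1 w‖ ≤ BC.enorm w := by
  have h := Real.sqrt_le_sqrt (show ‖BC.std1 w‖ ^ 2 ≤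
    ‖BC.std1 w‖ ^ 2 + ‖BC.std2 w‖ ^ 2 by
      nlinarith [sq_nonneg (‖BC.std2 w‖)])
  rwa [Real.sqrt_sq (norm_nonneg _), ← BC.enorm] at h

lemma abs_std2_le (w : Bicomplex) : ‖BC.std2 w‖ ≤ BC.enorm w := by
  have h := Real.sqrt_le_sqrt (show ‖BC.std2 w‖ ^ 2 ≤
    ‖BC.std1 w‖ ^ 2 + ‖BC.std2 w‖ ^ 2 by
      nlinarith [sq_nonneg (‖BC.std1 w‖)])
  rwa [Real.sqrt_sq (norm_nonneg _), ← BC.enorm] at h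

lemma abs_fst_le (w : Bicomplex) : ‖w.1‖ ≤ 2 * BC.enorm w := by
  rw [fst_eq, sub_eq_add_neg]
  calc ‖BC.std1 w + -(Complex.I * BC.std2 w)‖
      ≤ ‖BC.std1 w‖ + ‖-(Complex.I * BC.std2 w)‖ :=
        norm_add_le _ _
    _ = ‖BC.std1 w‖ + ‖Complex.I * BC.std2 w‖ := by
        rw [norm_neg]
    _ ≤ 2 * BC.enorm w := by
        rw [norm_mul, Complex.norm_I, one_mul]
        linarith [abs_std1_le w, abs_std2_le w]

lemma abs_snd_le (w : Bicomplex) : ‖w.2‖ ≤ 2 * BC.enorm w := by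
  rw [snd_eq]
  calc ‖BC.std1 w + Complex.I * BC.std2 w‖
      ≤ ‖BC.std1 w‖ + ‖Complex.I * BC.std2 w‖ :=
        norm_add_le _ _
    _ ≤ 2 * BC.enorm w := by
        rw [norm_mul, Complex.norm_I, one_mul]
        linarith [abs_std1_le w, abs_std2_le w]

end RieszAux

namespace RieszAux

lemma std1_conj3 (w : Bicomplex) :
    BC.std1 (BC.conj3 w) = starRingEnd ℂ (BC.std1 w) := by
  rw [conj3_eq]
  simp only [BC.std1, map_div₀, map_add]
  rw [show (starRingEnd ℂ) 2 = 2 by simp [Complex.ext_iff]]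

lemma std1_pair (x y : ℂ) : BC.std1 ((x, y) : Bicomplex) = (x + y) / 2 := rfl

lemma std1_mul_ofC (c : ℂ) (w : Bicomplex) :
    BC.std1 (BC.ofC c * w) = c * BC.std1 w := by
  simp only [BC.ofC, BC.std1, Prod.fst_mul, Prod.snd_mul, Prod.mk_mul_mk]
  ring

variable {M : Type*} [AddCommGroup M] [Module Bicomplex M] (S : BCInner M)

lemma inner_e1 (ψ φ : M) :
    S.inner (BC.e1 • ψ) (BC.e1 • φ) = ((S.inner ψ φ).1, 0) := by
  rw [S.smul_right, inner_smul_left, conj3_eq, e1_eq]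
  simp [Prod.ext_iff, Prod.fst_mul, Prod.snd_mul]

lemma inner_e2 (ψ φ : M) :
    S.inner (BC.e2 • ψ) (BC.e2 • φ) = (0, (S.inner ψ φ).2) := by
  rw [S.smul_right, inner_smul_left, conj3_eq, e2_eq]
  simp [Prod.ext_iff, Prod.fst_mul, Prod.snd_mul]

lemma bnorm_eq (φ : M) :
    S.bnorm φ = Real.sqrt (((S.inner φ φ).1.re + (S.inner φ φ).2.re) / 2) := by
  rw [BCInner.bnorm, inner_e1, inner_e2]
  obtain ⟨x, y, hx, hy, h⟩ := inner_self S φ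
  rw [h]
  simp only [Complex.ofReal_re, Complex.zero_re]
  rw [Real.sqrt_div (by linarith : (0:ℝ) ≤ x + y) 2, div_eq_inv_mul]

end RieszAux

namespace RieszAux
lemma std1_def (w : Bicomplex) : BC.std1 w = (w.1 + w.2) / 2 := rfl
end RieszAux

open RieszAux in
/-- Bicomplex Riesz representation theorem: every continuous 𝕋-linear functional
on a bicomplex Hilbert space is given by the scalar product with a unique ψ. -/
theorem bicomplex_riesz (M : Type*) [AddCommGroup M] [Module Bicomplex M]
    (S : BCInner M) (hC : S.Complete) (f : M → Bicomplex)
    (hadd : ∀ φ χ : M, f (φ + χ) = f φ + f χ)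
    (hsmul : ∀ (α : Bicomplex) (φ : M), f (α • φ) = α * f φ)
    (hcont : ∀ (g : ℕ → M) (x : M), S.SeqLim g x →
      ∀ ε : ℝ, 0 < ε → ∃ N, ∀ n ≥ N, BC.enorm (f (g n) - f x) < ε) :
    ∃! ψ : M, ∀ φ : M, f φ = S.inner ψ φ := by
  classical
  letI : Module ℂ M := Module.compHom M (algebraMap ℂ Bicomplex)
  have hzsmul : ∀ (z : ℂ) (φ : M), (z • φ : M) = BC.ofC z • φ := fun _ _ => rfl
  -- the inner product core
  letI core : InnerProductSpace.Core ℂ M :=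
  { inner := fun x y => BC.std1 (S.inner x y)
    conj_inner_symm := by
      intro x y
      show (starRingEnd ℂ) (BC.std1 (S.inner y x)) = BC.std1 (S.inner x y)
      rw [← std1_conj3, ← S.conj_symm]
    re_inner_nonneg := by
      intro x
      obtain ⟨a, b, ha, hb, h⟩ := inner_self S x
      show 0 ≤ RCLike.re (BC.std1 (S.inner x x))
      rw [h, std1_pair]
      rw [show ((a:ℂ) + (b:ℂ)) / 2 = (((a+b)/2 : ℝ) : ℂ) by norm_cast]
      simp only [RCLike.re_to_complex, Complex.ofReal_re]
      positivity
    add_left := by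
      intro x y z
      show BC.std1 (S.inner (x + y) z) =
        BC.std1 (S.inner x z) + BC.std1 (S.inner y z)
      rw [RieszAux.inner_add_left]
      simp only [BC.std1, Prod.fst_add, Prod.snd_add]
      ring
    smul_left := by
      intro x y r
      show BC.std1 (S.inner (r • x) y) = (starRingEnd ℂ) r * BC.std1 (S.inner x y)
      rw [hzsmul, RieszAux.inner_smul_left, conj3_eq]
      rw [show ((starRingEnd ℂ) (BC.ofC r).1, (starRingEnd ℂ) (BC.ofC r).2) =
        BC.ofC (starRingEnd ℂ r) from rfl, std1_mul_ofC]
    definite := by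
      intro x hx
      obtain ⟨a, b, ha, hb, h⟩ := inner_self S x
      have hx' : BC.std1 (S.inner x x) = 0 := hx
      clear hx
      rw [h, std1_pair] at hx'
      have hab' : a + b = 0 := by
        have h2 : ((a + b : ℝ) : ℂ) = 0 := by push_cast; linear_combination 2 * hx'
        exact_mod_cast h2
      have ha0 : a = 0 := by linarith
      have hb0 : b = 0 := by linarith
      apply (S.definite x).mp
      rw [h, ha0, hb0]
      simp [Prod.ext_iff] }
  letI : NormedAddCommGroup M := core.toNormedAddCommGroup
  letI : InnerProductSpace ℂ M := InnerProductSpace.ofCore core.toCore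
  -- norm = bnorm
  have hnorm : ∀ φ : M, ‖φ‖ = S.bnorm φ := by
    intro φ
    rw [norm_eq_sqrt_re_inner (𝕜 := ℂ), bnorm_eq]
    congr 1
    obtain ⟨a, b, ha, hb, h⟩ := inner_self S φ
    show RCLike.re (BC.std1 (S.inner φ φ)) = _
    rw [h, std1_pair]
    rw [show ((a:ℂ) + (b:ℂ)) / 2 = (((a+b)/2 : ℝ) : ℂ) by norm_cast]
    simp [RCLike.re_to_complex, Complex.ofReal_re]
  -- completeness
  letI : CompleteSpace M := by
    apply Metric.complete_of_cauchySeq_tendsto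
    intro u hu
    rw [Metric.cauchySeq_iff] at hu
    obtain ⟨x, hx⟩ := hC u (by
      intro ε hε
      obtain ⟨N, hN⟩ := hu ε hε
      exact ⟨N, fun m hm n hn => by
        have := hN m hm n hn
        rwa [dist_eq_norm, hnorm] at this⟩)
    refine ⟨x, Metric.tendsto_atTop.mpr ?_⟩
    intro ε hε
    obtain ⟨N, hN⟩ := hx ε hε
    exact ⟨N, fun n hn => by rw [dist_eq_norm, hnorm]; exact hN n hn⟩
  -- the two continuous component functionals
  have seqlim_of_tendsto : ∀ (u : ℕ → M) (p : M),
      Filter.Tendsto u Filter.atTop (nhds p) → S.SeqLim u p := by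
    intro u p hup ε hε
    obtain ⟨N, hN⟩ := Metric.tendsto_atTop.mp hup ε hε
    exact ⟨N, fun n hn => by have := hN n hn; rwa [dist_eq_norm, hnorm] at this⟩
  have cont1 : Continuous (fun φ : M => (f φ).1) := by
    apply SeqContinuous.continuous
    intro u p hup
    rw [Metric.tendsto_atTop]
    intro ε hε
    obtain ⟨N, hN⟩ := hcont u p (seqlim_of_tendsto u p hup) (ε/2) (by linarith)
    refine ⟨N, fun n hn => ?_⟩
    have h1 := abs_fst_le (f (u n) - f p)
    have h2 := hN n hn
    rw [Complex.dist_eq]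
    calc ‖(f (u n)).1 - (f p).1‖
        = ‖(f (u n) - f p).1‖ := by rw [Prod.fst_sub]
      _ ≤ 2 * BC.enorm (f (u n) - f p) := h1
      _ < ε := by linarith
  have cont2 : Continuous (fun φ : M => (f φ).2) := by
    apply SeqContinuous.continuous
    intro u p hup
    rw [Metric.tendsto_atTop]
    intro ε hε
    obtain ⟨N, hN⟩ := hcont u p (seqlim_of_tendsto u p hup) (ε/2) (by linarith)
    refine ⟨N, fun n hn => ?_⟩
    have h1 := abs_snd_le (f (u n) - f p)
    have h2 := hN n hn
    rw [Complex.dist_eq]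
    calc ‖(f (u n)).2 - (f p).2‖
        = ‖(f (u n) - f p).2‖ := by rw [Prod.snd_sub]
      _ ≤ 2 * BC.enorm (f (u n) - f p) := h1
      _ < ε := by linarith
  let ℓ₁ : M →L[ℂ] ℂ :=
    { toFun := fun φ => (f φ).1
      map_add' := fun φ χ => by
        show (f (φ + χ)).1 = (f φ).1 + (f χ).1
        rw [hadd, Prod.fst_add]
      map_smul' := fun z φ => by
        show (f (z • φ)).1 = z * (f φ).1
        rw [hzsmul, hsmul]
        rfl
      cont := cont1 }
  let ℓ₂ : M →L[ℂ] ℂ :=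
    { toFun := fun φ => (f φ).2
      map_add' := fun φ χ => by
        show (f (φ + χ)).2 = (f φ).2 + (f χ).2
        rw [hadd, Prod.snd_add]
      map_smul' := fun z φ => by
        show (f (z • φ)).2 = z * (f φ).2
        rw [hzsmul, hsmul]
        rfl
      cont := cont2 }
  set ψ₁ := (InnerProductSpace.toDual ℂ M).symm ℓ₁ with hψ₁
  set ψ₂ := (InnerProductSpace.toDual ℂ M).symm ℓ₂ with hψ₂
  have hr1' : ∀ φ : M, (inner ℂ ψ₁ φ : ℂ) = ℓ₁ φ := fun φ =>
    InnerProductSpace.toDual_symm_apply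
  have hr2' : ∀ φ : M, (inner ℂ ψ₂ φ : ℂ) = ℓ₂ φ := fun φ =>
    InnerProductSpace.toDual_symm_apply
  have hr1 : ∀ φ : M, BC.std1 (S.inner ψ₁ φ) = (f φ).1 := fun φ => hr1' φ
  have hr2 : ∀ φ : M, BC.std1 (S.inner ψ₂ φ) = (f φ).2 := fun φ => hr2' φ
  -- extract the components
  have hc1 : ∀ φ : M, (S.inner ψ₁ φ).1 = 2 * (f φ).1 := by
    intro φ
    have h := hr1 (BC.e1 • φ)
    rw [S.smul_right, hsmul, e1_eq, std1_def] at h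
    simp only [Prod.fst_mul, Prod.snd_mul, one_mul, zero_mul, add_zero] at h
    linear_combination 2 * h
  have hc2 : ∀ φ : M, (S.inner ψ₂ φ).2 = 2 * (f φ).2 := by
    intro φ
    have h := hr2 (BC.e2 • φ)
    rw [S.smul_right, hsmul, e2_eq, std1_def] at h
    simp only [Prod.fst_mul, Prod.snd_mul, one_mul, zero_mul, zero_add] at h
    linear_combination 2 * h
  -- the representing vector
  set α₁ : Bicomplex := (((2:ℂ)⁻¹ : ℂ), (0:ℂ)) with hα₁
  set α₂ : Bicomplex := ((0:ℂ), ((2:ℂ)⁻¹ : ℂ)) with hα₂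
  have hrep : ∀ φ : M, f φ = S.inner (α₁ • ψ₁ + α₂ • ψ₂) φ := by
    intro φ
    rw [RieszAux.inner_add_left, RieszAux.inner_smul_left, RieszAux.inner_smul_left,
      conj3_eq, conj3_eq]
    apply Prod.ext
    · simp only [Prod.fst_add, Prod.fst_mul, hα₁, hα₂]
      rw [hc1 φ]
      simp [Complex.ext_iff]
    · simp only [Prod.snd_add, Prod.snd_mul, hα₁, hα₂]
      rw [hc2 φ]
      simp [Complex.ext_iff]
  refine ⟨α₁ • ψ₁ + α₂ • ψ₂, hrep, ?_⟩
  intro ψ' hψ'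
  have hdiff : ∀ φ : M, S.inner (ψ' - (α₁ • ψ₁ + α₂ • ψ₂)) φ = 0 := by
    intro φ
    rw [RieszAux.inner_sub_left, ← hψ' φ, ← hrep φ, sub_self]
  exact sub_eq_zero.mp ((S.definite _).mp (hdiff (ψ' - (α₁ • ψ₁ + α₂ • ψ₂))))
end
end

section
/- Let {ψₙ} be an orthonormal sequence in a bicomplex Hilbert space M and {αₙ} a sequence of bicomplex numbers. Then the series Σₙ αₙψₙ converges in M if and only if Σₙ |αₙ|² converges in ℝ, where |·| is the Euclidean norm on 𝕋. -/
noncomputable section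

section Aux

open BC

lemma conj3_eq (w : Bicomplex) :
    BC.conj3 w = (starRingEnd ℂ w.1, starRingEnd ℂ w.2) := by
  simp only [BC.conj3, BC.ofC, BC.std1, BC.std2, BC.i2, Prod.ext_iff, Prod.mk_mul_mk,
    Prod.mk_sub_mk, Prod.fst_sub, Prod.snd_sub, map_div₀, map_add, map_sub, map_mul,
    Complex.conj_I, Prod.mk.injEq]
  constructor <;> · push_cast; ring_nf; simp [Complex.ext_iff]; ring_nf; constructor <;> trivial

lemma e1_eq : BC.e1 = ((1 : ℂ), (0 : ℂ)) := by
  simp only [BC.e1, BC.j, BC.i1, BC.i2, Prod.ext_iff, Prod.mk_mul_mk]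
  norm_num [Prod.ext_iff, Complex.ext_iff, Prod.div_def]

lemma e2_eq : BC.e2 = ((0 : ℂ), (1 : ℂ)) := by
  simp only [BC.e2, BC.j, BC.i1, BC.i2, Prod.ext_iff, Prod.mk_mul_mk]
  norm_num [Prod.ext_iff, Complex.ext_iff, Prod.div_def]

lemma enorm_sq (w : Bicomplex) :
    BC.enorm w ^ 2 = (‖w.1‖ ^ 2 + ‖w.2‖ ^ 2) / 2 := by
  rw [BC.enorm, Real.sq_sqrt (by positivity)]
  simp only [BC.std1, BC.std2, ← Complex.normSq_eq_norm_sq]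
  simp [Complex.normSq_apply, Complex.add_re, Complex.add_im]
  ring

end Aux
section Aux2

variable {M : Type*} [AddCommGroup M] [Module Bicomplex M] (S : BCInner M)

lemma conj3_add (v w : Bicomplex) : BC.conj3 (v + w) = BC.conj3 v + BC.conj3 w := by
  simp [conj3_eq, Prod.ext_iff]

lemma conj3_mul (v w : Bicomplex) : BC.conj3 (v * w) = BC.conj3 v * BC.conj3 w := by
  simp [conj3_eq, Prod.ext_iff]

lemma bc_inner_zero_right (ψ : M) : S.inner ψ 0 = 0 := by
  have := S.add_right ψ 0 0
  simpa using this.symm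

lemma bc_inner_zero_left (ψ : M) : S.inner 0 ψ = 0 := by
  rw [S.conj_symm, bc_inner_zero_right]
  simp [conj3_eq, Prod.ext_iff]

lemma bc_inner_add_left (ψ φ χ : M) :
    S.inner (ψ + φ) χ = S.inner ψ χ + S.inner φ χ := by
  rw [S.conj_symm, S.add_right, conj3_add, ← S.conj_symm, ← S.conj_symm]

lemma bc_inner_smul_left (a : Bicomplex) (ψ φ : M) :
    S.inner (a • ψ) φ = BC.conj3 a * S.inner ψ φ := by
  rw [S.conj_symm, S.smul_right, conj3_mul, ← S.conj_symm]

lemma bc_inner_neg_right (ψ φ : M) : S.inner ψ (-φ) = -S.inner ψ φ := by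
  have := S.add_right ψ φ (-φ)
  simp only [add_neg_cancel, bc_inner_zero_right] at this
  linear_combination -this

lemma bc_inner_neg_left (ψ φ : M) : S.inner (-ψ) φ = -S.inner ψ φ := by
  have := bc_inner_add_left S ψ (-ψ) φ
  simp only [add_neg_cancel, bc_inner_zero_left] at this
  linear_combination -this

lemma bc_inner_sub_right (ψ φ χ : M) : S.inner ψ (φ - χ) = S.inner ψ φ - S.inner ψ χ := by
  rw [sub_eq_add_neg, S.add_right, bc_inner_neg_right]; ring

lemma bc_inner_sub_left (ψ φ χ : M) : S.inner (ψ - φ) χ = S.inner ψ χ - S.inner φ χ := by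
  rw [sub_eq_add_neg, bc_inner_add_left, bc_inner_neg_left]; ring

lemma bc_inner_sum_right {ι : Type*} (T : Finset ι) (ψ : M) (g : ι → M) :
    S.inner ψ (∑ i ∈ T, g i) = ∑ i ∈ T, S.inner ψ (g i) := by
  classical
  induction T using Finset.induction with
  | empty => simp [bc_inner_zero_right]
  | insert a T' h ih =>
                   rw [Finset.sum_insert h, Finset.sum_insert h, S.add_right, ih]

lemma bc_inner_sum_left {ι : Type*} (T : Finset ι) (g : ι → M) (ψ : M) :
    S.inner (∑ i ∈ T, g i) ψ = ∑ i ∈ T, S.inner (g i) ψ := by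
  classical
  induction T using Finset.induction with
  | empty => simp [bc_inner_zero_left]
  | insert a T' h ih =>
                   rw [Finset.sum_insert h, Finset.sum_insert h, bc_inner_add_left, ih]

/-- The real quadratic form. -/
def Rq (φ : M) : ℝ := (S.inner φ φ).1.re + (S.inner φ φ).2.re

lemma Rq_nonneg (φ : M) : 0 ≤ Rq S φ := by
  obtain ⟨x, y, hx, hy, hxy⟩ := S.hyperbolic_pos φ
  rw [Rq, hxy, e1_eq, e2_eq]
  simp [BC.ofC, Prod.ext_iff]
  positivity

lemma bnorm_eq (φ : M) : S.bnorm φ = (Real.sqrt 2)⁻¹ * Real.sqrt (Rq S φ) := by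
  have h1 : S.inner (BC.e1 • φ) (BC.e1 • φ) = BC.e1 * S.inner φ φ := by
    rw [S.smul_right, bc_inner_smul_left]
    have hc : BC.conj3 BC.e1 = BC.e1 := by simp [conj3_eq, e1_eq, Prod.ext_iff]
    have he : BC.e1 * BC.e1 = BC.e1 := by simp [e1_eq, Prod.ext_iff]
    rw [hc, ← mul_assoc, he]
  have h2 : S.inner (BC.e2 • φ) (BC.e2 • φ) = BC.e2 * S.inner φ φ := by
    rw [S.smul_right, bc_inner_smul_left]
    have hc : BC.conj3 BC.e2 = BC.e2 := by simp [conj3_eq, e2_eq, Prod.ext_iff]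
    have he : BC.e2 * BC.e2 = BC.e2 := by simp [e2_eq, Prod.ext_iff]
    rw [hc, ← mul_assoc, he]
  rw [BCInner.bnorm, h1, h2, e1_eq, e2_eq, Rq]
  simp

lemma bnorm_sq (φ : M) : S.bnorm φ ^ 2 = Rq S φ / 2 := by
  rw [bnorm_eq, mul_pow, Real.sq_sqrt (Rq_nonneg S φ)]
  rw [inv_pow, Real.sq_sqrt (by norm_num : (0:ℝ) ≤ 2)]
  ring

lemma bnorm_nonneg (φ : M) : 0 ≤ S.bnorm φ := by
  rw [bnorm_eq]; positivity

lemma bnorm_eq_sqrt (φ : M) : S.bnorm φ = Real.sqrt (Rq S φ / 2) := by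
  rw [bnorm_eq, Real.sqrt_div (Rq_nonneg S φ), div_eq_mul_inv, mul_comm]

end Aux2
section Aux3

variable {M : Type*} [AddCommGroup M] [Module Bicomplex M] (S : BCInner M)

lemma Rq_neg (φ : M) : Rq S (-φ) = Rq S φ := by
  unfold Rq; rw [bc_inner_neg_left, bc_inner_neg_right, neg_neg]

lemma bnorm_sub_comm (x y : M) : S.bnorm (x - y) = S.bnorm (y - x) := by
  rw [bnorm_eq, bnorm_eq, ← neg_sub y x, Rq_neg]

lemma Rq_sub_le (u v : M) : Rq S (u - v) ≤ 2 * Rq S u + 2 * Rq S v := by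
  have expand : S.inner (u - v) (u - v) + S.inner (u + v) (u + v)
      = 2 * S.inner u u + 2 * S.inner v v := by
    rw [bc_inner_sub_left, bc_inner_sub_right, bc_inner_sub_right,
      bc_inner_add_left, S.add_right, S.add_right,
      S.conj_symm v u]
    have := conj3_eq (S.inner u v)
    set c := S.inner u v
    rw [this]
    obtain ⟨c1, c2⟩ := c
    have h2 : (2 : Bicomplex) = ((2:ℂ), (2:ℂ)) := rfl
    rw [h2]
    simp only [Prod.ext_iff, Prod.mk_add_mk, Prod.mk_sub_mk, Prod.mk_mul_mk,
      Prod.fst_add, Prod.snd_add, Prod.fst_sub, Prod.snd_sub, Prod.fst_mul, Prod.snd_mul]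
    constructor <;> ring
  have h1 := congrArg (fun w : Bicomplex => w.1.re + w.2.re) expand
  simp only [Prod.fst_add, Prod.snd_add, Prod.fst_mul, Prod.snd_mul, Complex.add_re,
    Complex.mul_re] at h1
  have hR : Rq S (u - v) + Rq S (u + v) = 2 * Rq S u + 2 * Rq S v := by
    unfold Rq
    norm_num at h1 ⊢
    linarith
  have := Rq_nonneg S (u + v)
  linarith

lemma Rq_sum_ortho (ψ : ℕ → M)
    (hortho : ∀ n m, S.inner (ψ n) (ψ m) = if n = m then 1 else 0)
    (α : ℕ → Bicomplex) (T : Finset ℕ) :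
    Rq S (∑ l ∈ T, α l • ψ l) = ∑ l ∈ T, 2 * BC.enorm (α l) ^ 2 := by
  have key : S.inner (∑ l ∈ T, α l • ψ l) (∑ l ∈ T, α l • ψ l)
      = ∑ l ∈ T, BC.conj3 (α l) * α l := by
    rw [bc_inner_sum_left]
    refine Finset.sum_congr rfl fun l hl => ?_
    rw [bc_inner_smul_left, bc_inner_sum_right]
    simp_rw [S.smul_right, hortho]
    simp only [mul_ite, mul_one, mul_zero]
    rw [Finset.sum_ite_eq T l α]
    simp [hl]
  unfold Rq
  rw [key, Prod.fst_sum, Prod.snd_sum, Complex.re_sum, Complex.re_sum, ← Finset.sum_add_distrib]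
  refine Finset.sum_congr rfl fun l _ => ?_
  rw [conj3_eq, enorm_sq]
  simp only [Prod.fst_mul, Prod.snd_mul, Complex.mul_re, Complex.conj_re, Complex.conj_im,
    Complex.sq_norm, Complex.normSq_apply]
  ring

end Aux3
/-- For an orthonormal sequence {ψₙ} in a bicomplex Hilbert space, Σ αₙψₙ
converges iff Σ |αₙ|² converges in ℝ. -/
theorem bicomplex_series_convergence (M : Type*) [AddCommGroup M]
    [Module Bicomplex M] (S : BCInner M) (hC : S.Complete)
    (ψ : ℕ → M) (hortho : ∀ n m, S.inner (ψ n) (ψ m) = if n = m then 1 else 0)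
    (α : ℕ → Bicomplex) :
    (∃ x : M, S.SeriesLim (fun n => α n • ψ n) x) ↔
    (∃ L : ℝ, Filter.Tendsto
      (fun N => ∑ n ∈ Finset.range N, BC.enorm (α n) ^ 2)
      Filter.atTop (nhds L)) := by
  set s : ℕ → ℝ := fun N => ∑ n ∈ Finset.range N, BC.enorm (α n) ^ 2 with hs
  set f : ℕ → M := fun N => ∑ l ∈ Finset.range N, α l • ψ l with hf
  have hsmono : Monotone s := by
    intro a b hab
    exact Finset.sum_le_sum_of_subset_of_nonneg (Finset.range_subset_range.2 hab)
      (fun i _ _ => by positivity)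
  have hkey : ∀ m k : ℕ, m ≤ k → S.bnorm (f k - f m) = Real.sqrt (s k - s m) := by
    intro m k hmk
    have hsub : f k - f m = ∑ l ∈ Finset.Ico m k, α l • ψ l :=
      (Finset.sum_Ico_eq_sub _ hmk).symm
    have hRq : Rq S (f k - f m) = 2 * (s k - s m) := by
      rw [hsub, Rq_sum_ortho S ψ hortho α, ← Finset.sum_Ico_eq_sub _ hmk,
        Finset.mul_sum]
    rw [bnorm_eq_sqrt, hRq]
    ring_nf
  constructor
  · rintro ⟨x, hx⟩
    obtain ⟨N, hN⟩ := hx 1 one_pos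
    have hbdd : ∀ k, s k ≤ s N + 4 := by
      intro k
      rcases le_or_gt k N with h | h
      · have := hsmono h; linarith
      · have hNk : N ≤ k := h.le
        have h1 : f k - f N = (f k - x) - (f N - x) := by abel
        have hle : Rq S (f k - f N) ≤ 2 * Rq S (f k - x) + 2 * Rq S (f N - x) := by
          rw [h1]; exact Rq_sub_le S _ _
        have hbk : S.bnorm (f k - x) < 1 := hN k hNk
        have hbN : S.bnorm (f N - x) < 1 := hN N le_rfl
        have hk2 : Rq S (f k - x) < 2 := by
          have := bnorm_sq S (f k - x)
          nlinarith [bnorm_nonneg S (f k - x)]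
        have hN2 : Rq S (f N - x) < 2 := by
          have := bnorm_sq S (f N - x)
          nlinarith [bnorm_nonneg S (f N - x)]
        have hsq : S.bnorm (f k - f N) ^ 2 = s k - s N := by
          rw [hkey N k hNk, Real.sq_sqrt]
          have := hsmono hNk; linarith
        have := bnorm_sq S (f k - f N)
        linarith
    refine ⟨⨆ k, s k, tendsto_atTop_ciSup hsmono ⟨s N + 4, ?_⟩⟩
    rintro y ⟨k, rfl⟩
    exact hbdd k
  · rintro ⟨L, hL⟩
    have hcauchy : S.IsCauchy f := by
      intro ε hε
      obtain ⟨N, hN⟩ := Metric.cauchySeq_iff.1 hL.cauchySeq (ε ^ 2) (by positivity)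
      refine ⟨N, fun m hm n hn => ?_⟩
      have hd := hN m hm n hn
      rw [Real.dist_eq] at hd
      rcases le_total n m with h | h
      · rw [hkey n m h, ← Real.sqrt_sq hε.le]
        apply Real.sqrt_lt_sqrt (by have := hsmono h; linarith)
        calc s m - s n ≤ |s m - s n| := le_abs_self _
          _ < ε ^ 2 := hd
      · rw [bnorm_sub_comm, hkey m n h, ← Real.sqrt_sq hε.le]
        apply Real.sqrt_lt_sqrt (by have := hsmono h; linarith)
        calc s n - s m ≤ |s m - s n| := by rw [abs_sub_comm]; exact le_abs_self _
          _ < ε ^ 2 := hd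
    obtain ⟨x, hx⟩ := hC f hcauchy
    exact ⟨x, hx⟩
end
end
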